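/- arXiv:2508.12534 — 2 statements merged into one kernel-verified Lean document; each statement's English description precedes it below -/
import Mathlib

section
/- Let W be a module over the Lie algebra sl(2,ℂ), let m be an integer, and let w ∈ W be a vector such that h ⋅ w = (−m) • w and such that the family (f^k ⋅ w)_{k ∈ ℕ} (iterated action of f on w) is a basis of W as a complex vector space. Then e ⋅ w = 0, i.e., w is a highest weight vector. (This is the statement that the irreducible highest weight module δ̄(m), being a free ℂ[f]-module generated by its highest weight vector, is annihilated by e at that vector.) -/
open LieAlgebra.SpecialLinear

/-- The element `e = E₁₂` of `sl(2,ℂ)`. -/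
noncomputable def sl2e : sl (Fin 2) ℂ := single 0 1 (by decide) (1 : ℂ)

/-- The element `f = E₂₁` of `sl(2,ℂ)`. -/
noncomputable def sl2f : sl (Fin 2) ℂ := single 1 0 (by decide) (1 : ℂ)

/-- The element `h = E₁₁ - E₂₂ = [e,f]` of `sl(2,ℂ)`. -/
noncomputable def sl2h : sl (Fin 2) ℂ := ⁅sl2e, sl2f⁆

lemma he : ⁅sl2h, sl2e⁆ = (2:ℂ) • sl2e := by
  apply Subtype.ext
  show _ = (2:ℂ) • (sl2e : Matrix (Fin 2) (Fin 2) ℂ)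
  rw [sl_bracket]
  ext i j
  fin_cases i <;> fin_cases j <;>
    norm_num [sl2h, sl2e, sl2f, sl_bracket, Matrix.mul_apply, Fin.sum_univ_two,
      Matrix.single, Ring.lie_def, Matrix.sub_apply, Matrix.smul_apply, Matrix.of_apply]

lemma hf : ⁅sl2h, sl2f⁆ = (-2:ℂ) • sl2f := by
  apply Subtype.ext
  show _ = (-2:ℂ) • (sl2f : Matrix (Fin 2) (Fin 2) ℂ)
  rw [sl_bracket]
  ext i j
  fin_cases i <;> fin_cases j <;>
    norm_num [sl2h, sl2e, sl2f, sl_bracket, Matrix.mul_apply, Fin.sum_univ_two,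
      Matrix.single, Ring.lie_def, Matrix.sub_apply, Matrix.smul_apply, Matrix.of_apply]


/-- If `w` is an `h`-eigenvector of weight `-m` in an `sl(2,ℂ)`-module `W` such that the
iterates `f^k ⋅ w` form a `ℂ`-basis of `W`, then `e ⋅ w = 0`. -/
theorem highest_weight_vector_annihilated
    (W : Type*) [AddCommGroup W] [Module ℂ W]
    [LieRingModule (sl (Fin 2) ℂ) W] [LieModule ℂ (sl (Fin 2) ℂ) W]
    (m : ℤ) (w : W) (hw : ⁅sl2h, w⁆ = (-m) • w)
    (B : Module.Basis ℕ ℂ W)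
    (hB : ∀ k : ℕ, B k = ((LieModule.toEnd ℂ (sl (Fin 2) ℂ) W sl2f) ^ k) w) :
    ⁅sl2e, w⁆ = 0 := by
  have hw' : ⁅sl2h, w⁆ = ((-m : ℤ) : ℂ) • w := by rw [hw, Int.cast_smul_eq_zsmul]
  have hHB : ∀ k : ℕ, ⁅sl2h, B k⁆ = (((-m : ℤ) : ℂ) - 2 * k) • B k := by
    intro k
    induction k with
    | zero => simpa [hB 0] using hw'
    | succ k ih =>
      have hBk : B (k + 1) = ⁅sl2f, B k⁆ := by
        rw [hB (k + 1), hB k, pow_succ']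
        simp [LieModule.toEnd_apply_apply]
      rw [hBk, leibniz_lie, hf, smul_lie, ih, lie_smul]
      push_cast
      module
  set v := ⁅sl2e, w⁆ with hv_def
  have hv : ⁅sl2h, v⁆ = ((2 : ℂ) - m) • v := by
    rw [hv_def, leibniz_lie, he, smul_lie, hw', lie_smul]
    module
  set H := LieModule.toEnd ℂ (sl (Fin 2) ℂ) W sl2h with hH
  have h2 : H v = (B.repr v).sum fun j c => (c * (((-m : ℤ) : ℂ) - 2 * j)) • B j := by
    conv_lhs => rw [← B.linearCombination_repr v, Finsupp.linearCombination_apply]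
    rw [map_finsuppSum]
    refine Finsupp.sum_congr fun j _ => ?_
    rw [map_smul]
    have : H (B j) = (((-m : ℤ) : ℂ) - 2 * j) • B j := by
      simpa [hH, LieModule.toEnd_apply_apply] using hHB j
    rw [this, smul_smul, mul_comm]
  have h1 : H v = ((2 : ℂ) - m) • v := by
    simpa [hH, LieModule.toEnd_apply_apply] using hv
  have hzero : B.repr v = 0 := by
    ext k
    have hk := congrArg (fun u => B.repr u k) (h1.symm.trans h2)
    simp only [map_smul, map_finsuppSum, Finsupp.smul_apply, Finsupp.sum_apply,
      Module.Basis.repr_self, Finsupp.single_apply, smul_eq_mul, mul_ite, mul_zero,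
      Finsupp.sum_ite_eq', mul_one] at hk
    by_cases hc : B.repr v k = 0
    · simpa using hc
    · rw [if_pos (Finsupp.mem_support_iff.mpr hc)] at hk
      exfalso
      apply hc
      have h3 : ((2 : ℂ) * k + 2) * B.repr v k = 0 := by push_cast at hk ⊢; linear_combination hk
      have hne : ((2 : ℂ) * k + 2) ≠ 0 := by
        intro h
        have h' : (2:ℝ) * k + 2 = 0 := by
          simpa using congrArg Complex.re h
        have hk0 : (0:ℝ) ≤ (k:ℝ) := Nat.cast_nonneg k
        nlinarith [h', hk0]
      simpa [hne] using mul_eq_zero.mp h3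
  exact B.repr.map_eq_zero_iff.mp hzero
end

section
/- Let V and W be modules over the Lie algebra sl(2,ℂ), let n, m be integers, let v ∈ V satisfy h ⋅ v = n • v with (e^k ⋅ v)_{k ∈ ℕ} a ℂ-basis of V, and let w ∈ W satisfy h ⋅ w = (−m) • w with (f^k ⋅ w)_{k ∈ ℕ} a ℂ-basis of W. Equip V ⊗ W with the tensor product sl(2,ℂ)-module structure. Then the family indexed by ℕ × ℕ sending (a, b) to f^a ⋅ (e^b ⋅ (v ⊗ w)) is a basis of V ⊗ W as a complex vector space. -/
open LieAlgebra.SpecialLinear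
open scoped TensorProduct

section aux
variable {M : Type*} [AddCommGroup M] [Module ℂ M]

lemma aux_weight (H Q : Module.End ℂ M) (d : ℂ) (hHQ : H * Q = Q * H + d • Q)
    (x : M) (μ : ℂ) (hx : H x = μ • x) :
    ∀ k : ℕ, H ((Q ^ k) x) = (μ + d * k) • (Q ^ k) x := by
  intro k; induction k with
  | zero => simpa using hx
  | succ k ih =>
      have h1 : H (Q ((Q ^ k) x)) = Q (H ((Q ^ k) x)) + d • Q ((Q ^ k) x) := by
        have := congrArg (fun L : Module.End ℂ M => L ((Q ^ k) x)) hHQ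
        simpa [Module.End.mul_apply] using this
      rw [pow_succ', Module.End.mul_apply, h1, ih, map_smul, ← add_smul]
      congr 1
      push_cast
      ring

lemma aux_lower (P Q H : Module.End ℂ M) (hPQ : P * Q = Q * P + H) (d : ℂ)
    (hHQ : H * Q = Q * H + d • Q) (x : M) (μ : ℂ) (hx : H x = μ • x) (hp : P x = 0) :
    ∀ k : ℕ, P ((Q ^ (k + 1)) x) = ((k + 1 : ℂ) * (μ + d * k / 2)) • (Q ^ k) x := by
  have hw := aux_weight H Q d hHQ x μ hx
  intro k; induction k with
  | zero =>
      have h1 : P (Q x) = Q (P x) + H x := by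
        have := congrArg (fun L : Module.End ℂ M => L x) hPQ
        simpa [Module.End.mul_apply] using this
      simp [h1, hp, hx]
  | succ k ih =>
      have h1 : P (Q ((Q ^ (k + 1)) x)) = Q (P ((Q ^ (k + 1)) x)) + H ((Q ^ (k + 1)) x) := by
        have := congrArg (fun L : Module.End ℂ M => L ((Q ^ (k + 1)) x)) hPQ
        simpa [Module.End.mul_apply] using this
      rw [pow_succ', Module.End.mul_apply, h1, ih, hw, map_smul]
      rw [show Q ((Q ^ k) x) = (Q ^ (k + 1)) x by rw [pow_succ', Module.End.mul_apply], ← add_smul]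
      congr 1
      push_cast
      ring

lemma aux_zero (H : Module.End ℂ M) (B : Module.Basis ℕ ℂ M) (γ : ℕ → ℂ)
    (hB : ∀ k, H (B k) = γ k • B k) (y : M) (ν : ℂ) (hy : H y = ν • y)
    (hne : ∀ k, γ k ≠ ν) : y = 0 := by
  classical
  set Dc : (ℕ →₀ ℂ) →ₗ[ℂ] (ℕ →₀ ℂ) := Finsupp.lsum ℂ (fun k => γ k • Finsupp.lsingle k) with hDc
  have hD : H = (B.repr.symm.toLinearMap ∘ₗ Dc) ∘ₗ B.repr.toLinearMap := by
    apply B.ext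
    intro k
    simp [hB, Dc]
  have h2 : Dc (B.repr y) = ν • B.repr y := by
    have h3 : B.repr (H y) = Dc (B.repr y) := by
      rw [hD]; simp
    rw [hy, map_smul] at h3
    exact h3.symm
  have h4 : ∀ k, γ k * B.repr y k = ν * B.repr y k := by
    intro k
    have h5 := congrArg (fun c : ℕ →₀ ℂ => c k) h2
    simp only [Dc, Finsupp.lsum_apply, Finsupp.sum_apply, LinearMap.smul_apply,
      Finsupp.smul_apply, Finsupp.lsingle_apply, Finsupp.single_apply, smul_eq_mul,
      mul_ite, mul_zero] at h5
    rw [Finsupp.sum_ite_eq' (B.repr y) k (fun i b => γ i * b)] at h5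
    by_cases hk : k ∈ (B.repr y).support
    · simpa [hk] using h5
    · have : B.repr y k = 0 := Finsupp.notMem_support_iff.mp hk
      simp [this]
  have h6 : B.repr y = 0 := by
    ext k
    have h7 : (γ k - ν) * B.repr y k = 0 := by linear_combination h4 k
    rcases mul_eq_zero.mp h7 with h | h
    · exact absurd (sub_eq_zero.mp h) (hne k)
    · simpa using h
  exact B.repr.map_eq_zero_iff.mp h6

end aux

lemma sl2_he : ⁅sl2h, sl2e⁆ = (2 : ℂ) • sl2e := by
  have : (⁅sl2h, sl2e⁆ : sl (Fin 2) ℂ).val = ((2 : ℂ) • sl2e).val := by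
    rw [Submodule.coe_smul_of_tower]
    show _ * _ - _ * _ = _
    ext i j
    fin_cases i <;> fin_cases j <;>
      · simp [sl2e, sl2f, sl2h, val_single, Ring.lie_def, Matrix.mul_apply, Fin.sum_univ_two,
          Matrix.of_apply, Matrix.single_apply, Matrix.sub_apply, Matrix.smul_apply] <;>
        norm_num
  exact Subtype.ext this

lemma sl2_hf : ⁅sl2h, sl2f⁆ = (-2 : ℂ) • sl2f := by
  have : (⁅sl2h, sl2f⁆ : sl (Fin 2) ℂ).val = ((-2 : ℂ) • sl2f).val := by
    rw [Submodule.coe_smul_of_tower]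
    show _ * _ - _ * _ = _
    ext i j
    fin_cases i <;> fin_cases j <;>
      · simp [sl2e, sl2f, sl2h, val_single, Ring.lie_def, Matrix.mul_apply, Fin.sum_univ_two,
          Matrix.of_apply, Matrix.single_apply, Matrix.sub_apply, Matrix.smul_apply] <;>
        norm_num
  exact Subtype.ext this

attribute [local instance 100] LieRing.ofAssociativeRing

/-- If `v` generates `V` freely under `e` with `h ⋅ v = n • v`, and `w` generates `W` freely
under `f` with `h ⋅ w = (-m) • w`, then the family `(a, b) ↦ f^a ⋅ (e^b ⋅ (v ⊗ w))` is a
`ℂ`-basis of `V ⊗ W` (with the diagonal action). -/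
theorem tensor_basis_fa_eb
    (V : Type*) [AddCommGroup V] [Module ℂ V]
    [LieRingModule (sl (Fin 2) ℂ) V] [LieModule ℂ (sl (Fin 2) ℂ) V]
    (W : Type*) [AddCommGroup W] [Module ℂ W]
    [LieRingModule (sl (Fin 2) ℂ) W] [LieModule ℂ (sl (Fin 2) ℂ) W]
    (n m : ℤ) (v : V) (w : W)
    (hv : ⁅sl2h, v⁆ = n • v)
    (Bv : Module.Basis ℕ ℂ V)
    (hBv : ∀ k : ℕ, Bv k = ((LieModule.toEnd ℂ (sl (Fin 2) ℂ) V sl2e) ^ k) v)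
    (hw : ⁅sl2h, w⁆ = (-m) • w)
    (Bw : Module.Basis ℕ ℂ W)
    (hBw : ∀ k : ℕ, Bw k = ((LieModule.toEnd ℂ (sl (Fin 2) ℂ) W sl2f) ^ k) w) :
    ∃ B : Module.Basis (ℕ × ℕ) ℂ (V ⊗[ℂ] W),
      ∀ a b : ℕ,
        B (a, b) =
          ((LieModule.toEnd ℂ (sl (Fin 2) ℂ) (V ⊗[ℂ] W) sl2f) ^ a)
            (((LieModule.toEnd ℂ (sl (Fin 2) ℂ) (V ⊗[ℂ] W) sl2e) ^ b) (v ⊗ₜ[ℂ] w)) := by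
  classical
  set eV := LieModule.toEnd ℂ (sl (Fin 2) ℂ) V sl2e with heV
  set fV := LieModule.toEnd ℂ (sl (Fin 2) ℂ) V sl2f with hfV
  set hV := LieModule.toEnd ℂ (sl (Fin 2) ℂ) V sl2h with hhV
  set eW := LieModule.toEnd ℂ (sl (Fin 2) ℂ) W sl2e with heW
  set fW := LieModule.toEnd ℂ (sl (Fin 2) ℂ) W sl2f with hfW
  set hW := LieModule.toEnd ℂ (sl (Fin 2) ℂ) W sl2h with hhW
  set ET := LieModule.toEnd ℂ (sl (Fin 2) ℂ) (V ⊗[ℂ] W) sl2e with hET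
  set FT := LieModule.toEnd ℂ (sl (Fin 2) ℂ) (V ⊗[ℂ] W) sl2f with hFT
  -- commutation relations in End V
  have comm_he_V : hV * eV = eV * hV + (2 : ℂ) • eV := by
    have h1 : ⁅hV, eV⁆ = (2 : ℂ) • eV := by
      rw [heV, hhV, ← LieHom.map_lie, sl2_he, map_smul]
    rw [Ring.lie_def, sub_eq_iff_eq_add] at h1
    rw [h1]; abel
  have comm_hf_V : hV * fV = fV * hV + (-2 : ℂ) • fV := by
    have h1 : ⁅hV, fV⁆ = (-2 : ℂ) • fV := by
      rw [hfV, hhV, ← LieHom.map_lie, sl2_hf, map_smul]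
    rw [Ring.lie_def, sub_eq_iff_eq_add] at h1
    rw [h1]; abel
  have comm_h_V : hV = eV * fV - fV * eV := by
    rw [hhV, show sl2h = ⁅sl2e, sl2f⁆ from rfl, LieHom.map_lie, Ring.lie_def, heV, hfV]
  have comm_he_W : hW * eW = eW * hW + (2 : ℂ) • eW := by
    have h1 : ⁅hW, eW⁆ = (2 : ℂ) • eW := by
      rw [heW, hhW, ← LieHom.map_lie, sl2_he, map_smul]
    rw [Ring.lie_def, sub_eq_iff_eq_add] at h1
    rw [h1]; abel
  have comm_hf_W : hW * fW = fW * hW + (-2 : ℂ) • fW := by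
    have h1 : ⁅hW, fW⁆ = (-2 : ℂ) • fW := by
      rw [hfW, hhW, ← LieHom.map_lie, sl2_hf, map_smul]
    rw [Ring.lie_def, sub_eq_iff_eq_add] at h1
    rw [h1]; abel
  have comm_h_W : hW = eW * fW - fW * eW := by
    rw [hhW, show sl2h = ⁅sl2e, sl2f⁆ from rfl, LieHom.map_lie, Ring.lie_def, heW, hfW]
  -- eigenvalue facts
  have hv' : hV v = (n : ℂ) • v := by
    rw [hhV, LieModule.toEnd_apply_apply, hv, Int.cast_smul_eq_zsmul]
  have hw' : hW w = (-(m : ℂ)) • w := by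
    rw [hhW, LieModule.toEnd_apply_apply, hw]
    rw [show (-(m : ℂ)) = ((-m : ℤ) : ℂ) by push_cast; ring, Int.cast_smul_eq_zsmul]
  have hwV : ∀ k : ℕ, hV ((eV ^ k) v) = ((n : ℂ) + 2 * k) • (eV ^ k) v :=
    aux_weight hV eV 2 comm_he_V v (n : ℂ) hv'
  have hwW : ∀ k : ℕ, hW ((fW ^ k) w) = ((-(m : ℂ)) + (-2) * k) • (fW ^ k) w :=
    aux_weight hW fW (-2) comm_hf_W w (-(m : ℂ)) hw'
  -- f kills v, e kills w
  have fv0 : fV v = 0 := by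
    have hyv : hV (fV v) = ((n : ℂ) - 2) • fV v := by
      have hcf := congrArg (fun L : Module.End ℂ V => L v) comm_hf_V
      simp only [Module.End.mul_apply, LinearMap.add_apply, LinearMap.smul_apply] at hcf
      rw [hcf, hv', map_smul]
      module
    apply aux_zero hV Bv (fun k => (n : ℂ) + 2 * k)
      (fun k => by rw [hBv k]; exact hwV k) (fV v) ((n : ℂ) - 2) hyv
    intro k h
    have : ((2 * k + 2 : ℕ) : ℂ) = 0 := by push_cast; linear_combination h
    rw [Nat.cast_eq_zero] at this
    omega
  have ew0 : eW w = 0 := by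
    have hyw : hW (eW w) = ((-(m : ℂ)) + 2) • eW w := by
      have hce := congrArg (fun L : Module.End ℂ W => L w) comm_he_W
      simp only [Module.End.mul_apply, LinearMap.add_apply, LinearMap.smul_apply] at hce
      rw [hce, hw', map_smul]
      module
    apply aux_zero hW Bw (fun k => (-(m : ℂ)) + (-2) * k)
      (fun k => by rw [hBw k]; exact hwW k) (eW w) ((-(m : ℂ)) + 2) hyw
    intro k h
    have : ((2 * k + 2 : ℕ) : ℂ) = 0 := by push_cast; linear_combination -h
    rw [Nat.cast_eq_zero] at this
    omega
  -- lowering in V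
  have lowV : ∀ k : ℕ, fV ((eV ^ (k + 1)) v) = ((k + 1 : ℂ) * (-(n : ℂ) + (-2) * k / 2)) • (eV ^ k) v := by
    apply aux_lower fV eV (-hV) _ (-2) _ v (-(n : ℂ)) _ fv0
    · rw [comm_h_V]; noncomm_ring
    · rw [neg_mul, mul_neg, comm_he_V]
      module
    · rw [LinearMap.neg_apply, hv', neg_smul]
  -- basis values
  have hBv0 : Bv 0 = v := by rw [hBv 0]; simp
  have hBw0 : Bw 0 = w := by rw [hBw 0]; simp
  have hfWB : ∀ j, fW (Bw j) = Bw (j + 1) := by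
    intro j; rw [hBw j, hBw (j + 1), pow_succ', Module.End.mul_apply]
  have hfVB : ∀ i : ℕ, fV (Bv (i + 1)) = ((i + 1 : ℂ) * (-(n : ℂ) + (-2) * i / 2)) • Bv i := by
    intro i; rw [hBv (i + 1), hBv i]; exact lowV i
  -- tensor action on pure tensors
  have ET_tmul : ∀ (x : V) (y : W), ET (x ⊗ₜ[ℂ] y) = eV x ⊗ₜ[ℂ] y + x ⊗ₜ[ℂ] eW y := by
    intro x y
    rw [hET, LieModule.toEnd_apply_apply, TensorProduct.LieModule.lie_tmul_right]
    rw [heV, heW, LieModule.toEnd_apply_apply, LieModule.toEnd_apply_apply]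
  have FT_tmul : ∀ (x : V) (y : W), FT (x ⊗ₜ[ℂ] y) = fV x ⊗ₜ[ℂ] y + x ⊗ₜ[ℂ] fW y := by
    intro x y
    rw [hFT, LieModule.toEnd_apply_apply, TensorProduct.LieModule.lie_tmul_right]
    rw [hfV, hfW, LieModule.toEnd_apply_apply, LieModule.toEnd_apply_apply]
  have ebt : ∀ b : ℕ, (ET ^ b) (v ⊗ₜ[ℂ] w) = ((eV ^ b) v) ⊗ₜ[ℂ] w := by
    intro b; induction b with
    | zero => simp
    | succ b ih =>
        rw [pow_succ', Module.End.mul_apply, ih, ET_tmul, ew0, TensorProduct.tmul_zero, add_zero,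
          ← Module.End.mul_apply, ← pow_succ']
  set T := Bv.tensorProduct Bw with hT
  have hTapp : ∀ p : ℕ × ℕ, T p = Bv p.1 ⊗ₜ[ℂ] Bw p.2 := by
    intro p; rw [hT, Module.Basis.tensorProduct_apply' Bv Bw p]
  set S : ℕ → Submodule ℂ (V ⊗[ℂ] W) :=
    fun b => Submodule.span ℂ (T '' {p : ℕ × ℕ | p.1 < b}) with hS
  have hS_mem : ∀ b (p : ℕ × ℕ), p.1 < b → T p ∈ S b := by
    intro b p hp
    exact Submodule.subset_span ⟨p, hp, rfl⟩
  have FT_basis : ∀ i j : ℕ, FT (T (i, j)) = fV (Bv i) ⊗ₜ[ℂ] Bw j + T (i, j + 1) := by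
    intro i j
    rw [hTapp (i, j), hTapp (i, j + 1)]
    simp only
    rw [FT_tmul, hfWB]
  have hS_inv : ∀ b, ∀ z ∈ S b, FT z ∈ S b := by
    intro b
    have hle : S b ≤ (S b).comap FT := by
      apply Submodule.span_le.mpr
      rintro z ⟨⟨i, j⟩, hij, rfl⟩
      simp only [Set.mem_setOf_eq] at hij
      simp only [SetLike.mem_coe, Submodule.mem_comap]
      rw [FT_basis i j]
      apply Submodule.add_mem
      · cases i with
        | zero =>
            rw [hBv0, fv0, TensorProduct.zero_tmul]
            exact Submodule.zero_mem _
        | succ i =>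
            rw [hfVB i, ← TensorProduct.smul_tmul', ← hTapp (i, j)]
            exact Submodule.smul_mem _ _ (hS_mem b (i, j) (by omega))
      · exact hS_mem b (i, j + 1) hij
    intro z hz
    exact hle hz
  have hS_bd : ∀ b j : ℕ, FT (T (b, j)) - T (b, j + 1) ∈ S b := by
    intro b j
    rw [FT_basis b j, add_sub_cancel_right]
    cases b with
    | zero =>
        rw [hBv0, fv0, TensorProduct.zero_tmul]
        exact Submodule.zero_mem _
    | succ b =>
        rw [hfVB b, ← TensorProduct.smul_tmul', ← hTapp (b, j)]
        exact Submodule.smul_mem _ _ (hS_mem (b + 1) (b, j) (by omega))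
  have key : ∀ b a : ℕ, (FT ^ a) (T (b, 0)) - T (b, a) ∈ S b := by
    intro b a; induction a with
    | zero => simp
    | succ a ih =>
        have h1 : (FT ^ (a + 1)) (T (b, 0)) - T (b, a + 1)
            = FT ((FT ^ a) (T (b, 0)) - T (b, a)) + (FT (T (b, a)) - T (b, a + 1)) := by
          rw [pow_succ', Module.End.mul_apply, map_sub]; abel
        rw [h1]
        exact Submodule.add_mem _ (hS_inv b _ ih) (hS_bd b a)
  set u : ℕ × ℕ → V ⊗[ℂ] W := fun p => (FT ^ p.1) ((ET ^ p.2) (v ⊗ₜ[ℂ] w)) with hu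
  have hu_eq : ∀ a b : ℕ, u (a, b) - T (b, a) ∈ S b := by
    intro a b
    have h1 : u (a, b) = (FT ^ a) (T (b, 0)) := by
      rw [hu]; simp only
      rw [ebt b, hTapp (b, 0)]
      simp only
      rw [hBv b, hBw0]
    rw [h1]; exact key b a
  -- spanning
  have hTspan : ∀ b a : ℕ, T (b, a) ∈ Submodule.span ℂ (Set.range u) := by
    intro b
    induction b using Nat.strong_induction_on with
    | _ b ih =>
        intro a
        have h1 : u (a, b) ∈ Submodule.span ℂ (Set.range u) := Submodule.subset_span ⟨(a, b), rfl⟩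
        have h2 : u (a, b) - T (b, a) ∈ Submodule.span ℂ (Set.range u) := by
          refine Submodule.span_le.mpr ?_ (hu_eq a b)
          rintro z ⟨⟨i, j⟩, hij, rfl⟩
          simp only [Set.mem_setOf_eq] at hij
          exact ih i hij j
        have h3 := Submodule.sub_mem _ h1 h2
        simpa using h3
  have hspan : ⊤ ≤ Submodule.span ℂ (Set.range u) := by
    rw [← T.span_eq]
    apply Submodule.span_le.mpr
    rintro z ⟨⟨b, a⟩, rfl⟩
    exact hTspan b a
  -- linear independence
  have hind : LinearIndependent ℂ u := by
    rw [linearIndependent_iff]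
    intro c hc
    by_contra hc0
    have hsupp : c.support.Nonempty := Finsupp.support_nonempty_iff.mpr hc0
    set b0 := (c.support.image Prod.snd).max' (hsupp.image _) with hb0
    have hb0mem : b0 ∈ c.support.image Prod.snd := Finset.max'_mem _ _
    obtain ⟨p0, hp0, hp0b⟩ := Finset.mem_image.mp hb0mem
    have hle : ∀ p ∈ c.support, p.2 ≤ b0 := fun p hp =>
      Finset.le_max' _ _ (Finset.mem_image_of_mem _ hp)
    have hzero : ∀ a : ℕ, c (a, b0) = 0 := by
      intro a
      have h0 : T.repr (Finsupp.linearCombination ℂ u c) (b0, a) = 0 := by rw [hc]; simp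
      rw [Finsupp.linearCombination_apply, map_finsuppSum] at h0
      simp only [map_smul] at h0
      rw [Finsupp.sum_apply] at h0
      have hterm : ∀ p ∈ c.support,
          (c p • T.repr (u p)) (b0, a) = if p = (a, b0) then c p else 0 := by
        rintro ⟨a', b'⟩ hp
        have hb' : b' ≤ b0 := hle (a', b') hp
        have hsub := T.repr_support_subset_of_mem_span {q : ℕ × ℕ | q.1 < b'} (hu_eq a' b')
        have hrest : T.repr (u (a', b') - T (b', a')) (b0, a) = 0 := by
          by_contra hne
          have hmem : (b0, a) ∈ (T.repr (u (a', b') - T (b', a'))).support :=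
            Finsupp.mem_support_iff.mpr hne
          have := hsub hmem
          simp only [Set.mem_setOf_eq] at this
          omega
        have hdecomp : T.repr (u (a', b'))
            = Finsupp.single ((b', a') : ℕ × ℕ) (1 : ℂ) + T.repr (u (a', b') - T (b', a')) := by
          rw [← T.repr_self (b', a'), ← map_add]
          congr 1
          abel
        rw [Finsupp.smul_apply, hdecomp, Finsupp.add_apply, hrest, add_zero,
          Finsupp.single_apply, smul_eq_mul]
        by_cases h : ((a', b') : ℕ × ℕ) = (a, b0)
        · have h2 : ((b', a') : ℕ × ℕ) = (b0, a) := by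
            rw [Prod.ext_iff] at h ⊢
            exact ⟨h.2, h.1⟩
          simp [h, h2]
        · have h2 : ((b', a') : ℕ × ℕ) ≠ (b0, a) := by
            intro h3
            apply h
            rw [Prod.ext_iff] at h3 ⊢
            exact ⟨h3.2, h3.1⟩
          simp [h, h2]
      rw [Finsupp.sum_congr (g2 := fun p cp => if p = (a, b0) then cp else 0) hterm, Finsupp.sum_ite_eq' c (a, b0) (fun _ cp => cp)] at h0
      by_cases hmem : ((a, b0) : ℕ × ℕ) ∈ c.support
      · simpa [hmem] using h0
      · exact Finsupp.notMem_support_iff.mp hmem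
    apply Finsupp.mem_support_iff.mp hp0
    have hp0' : p0 = (p0.1, b0) := by rw [← hp0b]
    rw [hp0']
    exact hzero p0.1
  refine ⟨Module.Basis.mk hind hspan, fun a b => ?_⟩
  rw [Module.Basis.mk_apply]
end
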